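/- arXiv:2004.05088 — 2 statements merged into one kernel-verified Lean document; each statement's English description precedes it below -/
import Mathlib

section
/- For every μ > λ, the improper integral ∫₀^∞ f_W(w) e^{−μw} dw converges and equals (1 − λD) · λ(e^{μD} − 1) / ((μ − λ)e^{μD} + λ); i.e., lim_{M→∞} θ(M, −μ) = (1 − λD) λ(e^{μD} − 1)/((μ − λ)e^{μD} + λ). -/
open Real MeasureTheory Filter

/-- Stationary waiting-time CDF of the M/D/1 queue (Erlang's formula),
extended by `0` on the negative reals. -/
noncomputable def PW (lam D w : ℝ) : ℝ :=
  if w < 0 then 0 else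
    (1 - lam * D) * ∑ k ∈ Finset.range (⌊w / D⌋₊ + 1),
      (-(lam * (w - (k : ℝ) * D))) ^ k * Real.exp (lam * (w - (k : ℝ) * D)) /
        (Nat.factorial k)

/-- Continuous part of the stationary waiting-time density of the M/D/1 queue. -/
noncomputable def fW (lam D w : ℝ) : ℝ :=
  (1 - lam * D) * (lam * Real.exp (lam * w) +
    ∑ k ∈ Finset.Icc 1 ⌊w / D⌋₊,
      (-lam) ^ k * (w - (k : ℝ) * D) ^ (k - 1) * Real.exp (lam * (w - (k : ℝ) * D)) *
        ((k : ℝ) + lam * (w - (k : ℝ) * D)) / (Nat.factorial k))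

/-!
On `[0, ∞)` the CDF `PW` is continuous and solves the delay equation
`PW' = λ (PW - PW(· - D))` with zero history on `(-∞, 0)`: the summand of Erlang's formula that
switches on at `kD` differentiates into `λ` times itself minus the previous summand. The density
`f_W` is exactly this derivative. For any such solution `P` with `λD < 1`, the derivative
`f = λ (P - P(· - D))` satisfies `f(w) = λ ∫_{w-D}^w f`, so a maximum of `|f|` on `[D, w]`
exceeding the bound of `|f|` on `[0, D]` would satisfy `|f| ≤ λD |f|`; hence `f` is bounded.
This makes `f e^{-μw}` integrable and `P(M) e^{-μM} → 0`. With `I = ∫₀^∞ P e^{-μw}`,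
integration by parts gives `∫₀^∞ f e^{-μw} = μ I - P(0)`, and the shift `w ↦ w - D` gives
`∫₀^∞ f e^{-μw} = λ (1 - e^{-μD}) I`; eliminating `I` yields the value, as `P(0) = 1 - λD`.
-/

open Set Topology
open scoped Nat

theorem abs_le_of_eq_mul_intervalIntegral {f : ℝ → ℝ} {c D K : ℝ} (hD : 0 ≤ D)
    (hcD : |c| * D < 1) (hf : ContinuousOn f (Ici D)) (hK : ∀ w ∈ Icc 0 D, |f w| ≤ K)
    (heq : ∀ w, D ≤ w → f w = c * ∫ x in (w - D)..w, f x) {w : ℝ} (hw : 0 ≤ w) :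
    |f w| ≤ K := by
  rcases le_total w D with hwD | hDw
  · exact hK w ⟨hw, hwD⟩
  obtain ⟨p, hp, hmax⟩ := isCompact_Icc.exists_isMaxOn (nonempty_Icc.2 hDw)
    (hf.mono Icc_subset_Ici_self).abs
  refine (hmax ⟨hDw, le_rfl⟩).trans ?_
  by_contra! hpK
  have hbound : ∀ x ∈ Icc 0 w, |f x| ≤ |f p| := fun x hx =>
    (le_total x D).elim (fun h => (hK x ⟨hx.1, h⟩).trans hpK.le) (fun h => hmax ⟨h, hx.2⟩)
  have hp_le : |f p| ≤ |c| * D * |f p| :=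
    calc |f p| = |c| * ‖∫ x in (p - D)..p, f x‖ := by rw [heq p hp.1, abs_mul, norm_eq_abs]
      _ ≤ |c| * (|f p| * |p - (p - D)|) := by
        gcongr
        refine intervalIntegral.norm_integral_le_of_norm_le_const fun x hx => hbound x ?_
        rw [uIoc_of_le (by linarith)] at hx
        exact ⟨by linarith [hx.1, hp.1], hx.2.trans hp.2⟩
      _ = |c| * D * |f p| := by rw [sub_sub_cancel, abs_of_nonneg hD]; ring
  have hK0 : 0 ≤ K := (abs_nonneg _).trans (hK 0 ⟨le_rfl, hD⟩)
  nlinarith [abs_nonneg c]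

structure IsDelaySolution (c D : ℝ) (P : ℝ → ℝ) : Prop where
  eq_zero_of_neg : ∀ w < 0, P w = 0
  continuousOn : ContinuousOn P (Ici 0)
  hasDerivWithinAt : ∀ x, 0 ≤ x → HasDerivWithinAt P (c * (P x - P (x - D))) (Ici x) x

namespace IsDelaySolution

variable {c D μ : ℝ} {P : ℝ → ℝ}

theorem indicator_eq (hP : IsDelaySolution c D P) : (Ici 0).indicator P = P := by
  ext w
  exact indicator_apply_eq_self.2 fun hw => hP.eq_zero_of_neg w (not_le.1 hw)

theorem measurable (hP : IsDelaySolution c D P) : Measurable P := by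
  classical
  rw [← hP.indicator_eq, ← piecewise_eq_indicator]
  exact hP.continuousOn.measurable_piecewise continuousOn_const measurableSet_Ici

theorem intervalIntegrable (hP : IsDelaySolution c D P) (a b : ℝ) :
    IntervalIntegrable P volume a b := by
  refine IntegrableOn.intervalIntegrable ?_
  rw [← hP.indicator_eq, integrableOn_indicator_iff measurableSet_Ici]
  exact (hP.continuousOn.mono inter_subset_left).integrableOn_compact
    (isCompact_uIcc.inter_left isClosed_Ici)

theorem intervalIntegrable_delay (hP : IsDelaySolution c D P) (a b : ℝ) :
    IntervalIntegrable (fun w => c * (P w - P (w - D))) volume a b := by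
  refine ((hP.intervalIntegrable a b).sub ?_).const_mul c
  simpa using (hP.intervalIntegrable (a - D) (b - D)).comp_sub_right D

theorem integral_delay_eq_sub (hP : IsDelaySolution c D P) {a b : ℝ} (ha : 0 ≤ a)
    (hab : a ≤ b) :
    ∫ w in a..b, c * (P w - P (w - D)) = P b - P a :=
  intervalIntegral.integral_eq_sub_of_hasDeriv_right_of_le hab
    (hP.continuousOn.mono (Icc_subset_Ici_iff hab |>.2 ha))
    (fun x hx => (hP.hasDerivWithinAt x (ha.trans hx.1.le)).Ioi_of_Ici)
    (hP.intervalIntegrable_delay a b)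

theorem continuousOn_delay (hP : IsDelaySolution c D P) (hD : 0 ≤ D) :
    ContinuousOn (fun w => c * (P w - P (w - D))) (Ici D) :=
  continuousOn_const.mul <| (hP.continuousOn.mono (Ici_subset_Ici.2 hD)).sub <|
    hP.continuousOn.comp (continuousOn_id.sub continuousOn_const) fun _ hx =>
      sub_nonneg.2 (mem_Ici.1 hx)

theorem exists_abs_delay_le (hP : IsDelaySolution c D P) (hc : 0 ≤ c) (hD : 0 < D)
    (hcD : c * D < 1) : ∃ K, ∀ w, 0 ≤ w → |c * (P w - P (w - D))| ≤ K := by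
  obtain ⟨B, hB⟩ := (isCompact_Icc (a := 0) (b := D)).exists_bound_of_continuousOn
    (hP.continuousOn.mono Icc_subset_Ici_self)
  have hPB : ∀ x ≤ D, |P x| ≤ B := fun x hx => by
    rcases lt_or_ge x 0 with h | h
    · rw [hP.eq_zero_of_neg x h, abs_zero]
      exact (norm_nonneg _).trans (hB 0 ⟨le_rfl, hD.le⟩)
    · exact hB x ⟨h, hx⟩
  refine ⟨c * (B + B), fun w hw => abs_le_of_eq_mul_intervalIntegral hD.le
    (by rwa [abs_of_nonneg hc]) (hP.continuousOn_delay hD.le) (fun x hx => ?_)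
    (fun x hx => ?_) hw⟩
  · rw [abs_mul, abs_of_nonneg hc]
    gcongr
    exact (abs_sub _ _).trans (add_le_add (hPB _ hx.2) (hPB _ (by linarith [hx.2])))
  · rw [hP.integral_delay_eq_sub (sub_nonneg.2 hx) (by linarith)]

theorem abs_le_of_abs_delay_le (hP : IsDelaySolution c D P) {K : ℝ}
    (hK : ∀ w, 0 ≤ w → |c * (P w - P (w - D))| ≤ K) {w : ℝ} (hw : 0 ≤ w) :
    |P w| ≤ |P 0| + K * w :=
  calc |P w| = |P 0 + ∫ x in (0:ℝ)..w, c * (P x - P (x - D))| := by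
        rw [hP.integral_delay_eq_sub le_rfl hw, add_sub_cancel]
    _ ≤ |P 0| + ‖∫ x in (0:ℝ)..w, c * (P x - P (x - D))‖ := abs_add_le _ _
    _ ≤ |P 0| + K * |w - 0| := by
        gcongr
        refine intervalIntegral.norm_integral_le_of_norm_le_const fun x hx => hK x ?_
        rw [uIoc_of_le hw] at hx
        exact hx.1.le
    _ = |P 0| + K * w := by rw [sub_zero, abs_of_nonneg hw]

theorem integrableOn_delay_mul_exp (hP : IsDelaySolution c D P) {K : ℝ}
    (hK : ∀ w, 0 ≤ w → |c * (P w - P (w - D))| ≤ K) (hμ : 0 < μ) :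
    IntegrableOn (fun w => c * (P w - P (w - D)) * exp (-μ * w)) (Ioi 0) := by
  refine ((exp_neg_integrableOn_Ioi 0 hμ).const_mul K).mono' ?_ ?_
  · exact ((measurable_const.mul (hP.measurable.sub (hP.measurable.comp
      (measurable_id.sub_const D)))).mul (by fun_prop)).aestronglyMeasurable
  · refine (ae_restrict_iff' measurableSet_Ioi).2 (ae_of_all _ fun w hw => ?_)
    rw [norm_mul, norm_of_nonneg (exp_pos _).le, norm_eq_abs]
    exact mul_le_mul_of_nonneg_right (hK w (le_of_lt hw)) (exp_pos _).le

theorem tendsto_mul_exp_neg (hP : IsDelaySolution c D P) {K : ℝ}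
    (hK : ∀ w, 0 ≤ w → |c * (P w - P (w - D))| ≤ K) (hμ : 0 < μ) :
    Tendsto (fun M => P M * exp (-μ * M)) atTop (𝓝 0) := by
  have hlim : Tendsto (fun M => (|P 0| + K * M) * exp (-μ * M)) atTop (𝓝 0) := by
    have h0 := tendsto_rpow_mul_exp_neg_mul_atTop_nhds_zero 0 μ hμ
    have h1 := tendsto_rpow_mul_exp_neg_mul_atTop_nhds_zero 1 μ hμ
    simpa [add_mul, mul_assoc] using (h0.const_mul |P 0|).add (h1.const_mul K)
  refine squeeze_zero_norm' ?_ hlim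
  filter_upwards [eventually_ge_atTop 0] with M hM
  rw [norm_mul, norm_of_nonneg (exp_pos _).le, norm_eq_abs]
  exact mul_le_mul_of_nonneg_right (hP.abs_le_of_abs_delay_le hK hM) (exp_pos _).le

theorem intervalIntegrable_mul_exp (hP : IsDelaySolution c D P) (a b : ℝ) :
    IntervalIntegrable (fun w => P w * exp (-μ * w)) volume a b :=
  (hP.intervalIntegrable a b).mul_continuousOn (by fun_prop)

theorem integral_delay_mul_exp_by_parts (hP : IsDelaySolution c D P) {M : ℝ} (hM : 0 ≤ M) :
    ∫ w in (0:ℝ)..M, c * (P w - P (w - D)) * exp (-μ * w) =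
      P M * exp (-μ * M) - P 0 + μ * ∫ w in (0:ℝ)..M, P w * exp (-μ * w) := by
  have hderiv : ∀ x ∈ Ioo 0 M, HasDerivWithinAt (fun w => P w * exp (-μ * w))
      (c * (P x - P (x - D)) * exp (-μ * x) - μ * (P x * exp (-μ * x))) (Ioi x) x := by
    intro x hx
    have hexp := ((hasDerivAt_id x).const_mul (-μ)).exp
    refine ((hP.hasDerivWithinAt x hx.1.le).Ioi_of_Ici.mul hexp.hasDerivWithinAt).congr_deriv ?_
    simp only [id, mul_one]
    ring
  have hparts := intervalIntegral.integral_eq_sub_of_hasDeriv_right_of_le hM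
    ((hP.continuousOn.mono Icc_subset_Ici_self).mul (by fun_prop)) hderiv
    (((hP.intervalIntegrable_delay 0 M).mul_continuousOn (by fun_prop)).sub
      ((hP.intervalIntegrable_mul_exp 0 M).const_mul μ))
  rw [intervalIntegral.integral_sub ((hP.intervalIntegrable_delay 0 M).mul_continuousOn
      (by fun_prop)) ((hP.intervalIntegrable_mul_exp 0 M).const_mul μ),
    intervalIntegral.integral_const_mul] at hparts
  simp only [Pi.mul_apply, mul_zero, exp_zero, mul_one] at hparts
  linarith

theorem integral_delay_mul_exp_by_shift (hP : IsDelaySolution c D P) (hD : 0 ≤ D) (M : ℝ) :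
    ∫ w in (0:ℝ)..M, c * (P w - P (w - D)) * exp (-μ * w) =
      c * ((∫ w in (0:ℝ)..M, P w * exp (-μ * w)) -
        exp (-μ * D) * ∫ w in (0:ℝ)..(M - D), P w * exp (-μ * w)) := by
  have hhistory : ∫ w in (-D)..0, P w * exp (-μ * w) = 0 := by
    rw [intervalIntegral.integral_of_le (by linarith), integral_Ioc_eq_integral_Ioo]
    exact setIntegral_eq_zero_of_forall_eq_zero fun w hw => by
      rw [hP.eq_zero_of_neg w hw.2, zero_mul]
  have hshift : ∫ w in (0:ℝ)..M, P (w - D) * exp (-μ * w) =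
      exp (-μ * D) * ∫ w in (0:ℝ)..(M - D), P w * exp (-μ * w) := by
    have hexp : (fun w => P (w - D) * exp (-μ * w)) =
        fun w => exp (-μ * D) * (P (w - D) * exp (-μ * (w - D))) := by
      ext w
      rw [mul_left_comm, ← exp_add]
      ring_nf
    rw [hexp, intervalIntegral.integral_const_mul,
      intervalIntegral.integral_comp_sub_right (fun w => P w * exp (-μ * w)), zero_sub,
      ← intervalIntegral.integral_add_adjacent_intervals (hP.intervalIntegrable_mul_exp (-D) 0)
        (hP.intervalIntegrable_mul_exp 0 (M - D)), hhistory, zero_add]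
  have hdelayed : IntervalIntegrable (fun w => P (w - D) * exp (-μ * w)) volume 0 M := by
    refine IntervalIntegrable.mul_continuousOn ?_ (by fun_prop)
    simpa using (hP.intervalIntegrable (0 - D) (M - D)).comp_sub_right D
  calc ∫ w in (0:ℝ)..M, c * (P w - P (w - D)) * exp (-μ * w)
      = c * ∫ w in (0:ℝ)..M, (P w * exp (-μ * w) - P (w - D) * exp (-μ * w)) := by
        rw [← intervalIntegral.integral_const_mul]
        congr 1 with w
        ring
    _ = _ := by
        rw [intervalIntegral.integral_sub (hP.intervalIntegrable_mul_exp 0 M) hdelayed, hshift]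

theorem tendsto_integral_delay_mul_exp (hP : IsDelaySolution c D P) (hc : 0 ≤ c) (hD : 0 < D)
    (hcD : c * D < 1) (hμ : c < μ) :
    Tendsto (fun M => ∫ w in (0:ℝ)..M, c * (P w - P (w - D)) * exp (-μ * w)) atTop
      (𝓝 (P 0 * c * (exp (μ * D) - 1) / ((μ - c) * exp (μ * D) + c))) := by
  have hμ0 : 0 < μ := hc.trans_lt hμ
  obtain ⟨K, hK⟩ := hP.exists_abs_delay_le hc hD hcD
  set J := ∫ w in Ioi 0, c * (P w - P (w - D)) * exp (-μ * w)
  have hJ : Tendsto (fun M => ∫ w in (0:ℝ)..M, c * (P w - P (w - D)) * exp (-μ * w)) atTop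
      (𝓝 J) :=
    intervalIntegral_tendsto_integral_Ioi 0 (hP.integrableOn_delay_mul_exp hK hμ0) tendsto_id
  have hI : Tendsto (fun M => ∫ w in (0:ℝ)..M, P w * exp (-μ * w)) atTop
      (𝓝 ((J - 0 + P 0) / μ)) := by
    refine (((hJ.sub (hP.tendsto_mul_exp_neg hK hμ0)).add_const (P 0)).div_const μ).congr' ?_
    filter_upwards [eventually_ge_atTop 0] with M hM
    rw [hP.integral_delay_mul_exp_by_parts hM]
    field_simp
    ring
  rw [sub_zero] at hI
  have hI_shift : Tendsto (fun M => ∫ w in (0:ℝ)..(M - D), P w * exp (-μ * w)) atTop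
      (𝓝 ((J + P 0) / μ)) :=
    hI.comp (tendsto_atTop_add_const_right _ (-D) tendsto_id)
  have hJ' := ((hI.sub (hI_shift.const_mul (exp (-μ * D)))).const_mul c).congr
    fun M => (hP.integral_delay_mul_exp_by_shift hD.le M).symm
  have hJ_eq := tendsto_nhds_unique hJ hJ'
  convert hJ using 2
  have hden : 0 < (μ - c) * exp (μ * D) + c := by
    have := sub_pos.2 hμ
    positivity
  rw [neg_mul, exp_neg] at hJ_eq
  field_simp at hJ_eq
  rw [div_eq_iff hden.ne']
  linear_combination -hJ_eq

end IsDelaySolution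

section Erlang

open Finset

noncomputable def erlangTerm (lam : ℝ) (k : ℕ) (u : ℝ) : ℝ :=
  (-(lam * u)) ^ k * exp (lam * u) / k !

noncomputable def erlangSum (lam D : ℝ) (n : ℕ) (w : ℝ) : ℝ :=
  ∑ k ∈ range n, erlangTerm lam k (w - k * D)

variable {lam D w : ℝ}

theorem continuous_erlangTerm (lam : ℝ) (k : ℕ) : Continuous (erlangTerm lam k) := by
  unfold erlangTerm
  fun_prop

theorem erlangTerm_zero_left (lam u : ℝ) : erlangTerm lam 0 u = exp (lam * u) := by
  simp [erlangTerm]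

theorem erlangTerm_zero_right {k : ℕ} (hk : k ≠ 0) : erlangTerm lam k 0 = 0 := by
  simp [erlangTerm, hk]

theorem hasDerivAt_erlangTerm_succ (lam : ℝ) (k : ℕ) (u : ℝ) :
    HasDerivAt (erlangTerm lam (k + 1))
      (lam * (erlangTerm lam (k + 1) u - erlangTerm lam k u)) u := by
  have hlin : HasDerivAt (fun v => -(lam * v)) (-lam) u := by
    simpa using ((hasDerivAt_id' u).const_mul lam).fun_neg
  have hexp : HasDerivAt (fun v => exp (lam * v)) (exp (lam * u) * lam) u := by
    simpa using ((hasDerivAt_id' u).const_mul lam).exp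
  refine (((hlin.fun_pow (k + 1)).mul hexp).div_const ((k + 1)! : ℝ)).congr_deriv ?_
  simp only [erlangTerm, Nat.factorial_succ, Nat.cast_mul, Nat.cast_succ, Nat.add_sub_cancel,
    pow_succ]
  field_simp
  ring

theorem fW_summand_eq (lam u : ℝ) (k : ℕ) :
    (-lam) ^ (k + 1) * u ^ k * exp (lam * u) * (((k + 1 : ℕ) : ℝ) + lam * u) /
        ((k + 1)! : ℝ) =
      lam * (erlangTerm lam (k + 1) u - erlangTerm lam k u) := by
  simp only [erlangTerm, Nat.factorial_succ, Nat.cast_mul, Nat.cast_succ, neg_mul_eq_neg_mul,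
    mul_pow, pow_succ]
  field_simp
  ring

theorem erlangSum_succ (lam D : ℝ) (n : ℕ) (w : ℝ) :
    erlangSum lam D (n + 1) w =
      exp (lam * w) + ∑ k ∈ range n, erlangTerm lam (k + 1) (w - D - k * D) := by
  rw [erlangSum, sum_range_succ', Nat.cast_zero, zero_mul, sub_zero, erlangTerm_zero_left, add_comm]
  congr 1
  refine sum_congr rfl fun k _ => ?_
  push_cast
  ring_nf

theorem erlangSum_succ_sub (lam D : ℝ) (n : ℕ) (w : ℝ) :
    erlangSum lam D (n + 1) w - erlangSum lam D n (w - D) =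
      exp (lam * w) + ∑ k ∈ range n,
        (erlangTerm lam (k + 1) (w - D - k * D) - erlangTerm lam k (w - D - k * D)) := by
  rw [erlangSum_succ, erlangSum, sum_sub_distrib]
  ring

theorem hasDerivAt_erlangSum_succ (lam D : ℝ) (n : ℕ) (w : ℝ) :
    HasDerivAt (erlangSum lam D (n + 1))
      (lam * (erlangSum lam D (n + 1) w - erlangSum lam D n (w - D))) w := by
  have hsum : HasDerivAt (fun v => ∑ k ∈ range n, erlangTerm lam (k + 1) (v - D - k * D))
      (∑ k ∈ range n, lam * (erlangTerm lam (k + 1) (w - D - k * D) -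
        erlangTerm lam k (w - D - k * D))) w :=
    HasDerivAt.fun_sum fun k _ => by
      simpa only [sub_sub] using (hasDerivAt_erlangTerm_succ lam k _).comp_sub_const w (D + k * D)
  have hexp : HasDerivAt (fun v => exp (lam * v)) (lam * exp (lam * w)) w := by
    simpa [mul_comm] using ((hasDerivAt_id' w).const_mul lam).exp
  rw [erlangSum_succ_sub, mul_add, mul_sum, funext (erlangSum_succ lam D n)]
  exact hexp.add hsum

theorem floor_div_eq_of_mem_Ico (hD : 0 < D) {n : ℕ} (hw : w ∈ Ico (n * D) ((n + 1) * D)) :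
    ⌊w / D⌋₊ = n := by
  rw [Nat.floor_eq_iff (div_nonneg ((by positivity : (0:ℝ) ≤ n * D).trans hw.1) hD.le),
    le_div_iff₀ hD, div_lt_iff₀ hD]
  exact hw

theorem PW_of_nonneg (hw : 0 ≤ w) :
    PW lam D w = (1 - lam * D) * erlangSum lam D (⌊w / D⌋₊ + 1) w := by
  rw [PW, if_neg (not_lt.2 hw)]
  rfl

theorem PW_sub_eq (hD : 0 < D) :
    PW lam D (w - D) = (1 - lam * D) * erlangSum lam D ⌊w / D⌋₊ (w - D) := by
  rcases lt_or_ge w D with hwD | hDw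
  · rw [PW, if_pos (by linarith), Nat.floor_eq_zero.2 ((div_lt_one hD).2 hwD), erlangSum,
      range_zero, sum_empty, mul_zero]
  · have h1 : 1 ≤ ⌊w / D⌋₊ := Nat.one_le_floor_iff _ |>.2 ((one_le_div hD).2 hDw)
    rw [PW_of_nonneg (sub_nonneg.2 hDw), sub_div, div_self hD.ne', Nat.floor_sub_one,
      Nat.sub_add_cancel h1]

theorem PW_eq_sum_max (hD : 0 < D) (hw : 0 ≤ w) {n : ℕ} (hn : ⌊w / D⌋₊ ≤ n) :
    PW lam D w = (1 - lam * D) * ∑ k ∈ range (n + 1), erlangTerm lam k (max (w - k * D) 0) := by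
  rw [PW_of_nonneg hw, erlangSum]
  congr 1
  rw [← sum_subset (range_subset_range.2 (Nat.succ_le_succ hn)) fun k _ hk => ?_]
  · refine sum_congr rfl fun k hk => ?_
    have hk : (k : ℝ) ≤ w / D :=
      (Nat.le_floor_iff (div_nonneg hw hD.le)).1 (Nat.lt_succ_iff.1 (mem_range.1 hk))
    rw [max_eq_left (sub_nonneg.2 ((le_div_iff₀ hD).1 hk))]
  · have hk : w / D < k := (Nat.floor_lt (div_nonneg hw hD.le)).1 (by simpa using hk)
    rw [max_eq_right (sub_nonpos.2 ((div_lt_iff₀ hD).1 hk).le), erlangTerm_zero_right]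
    rintro rfl
    exact (div_nonneg hw hD.le).not_gt (by exact_mod_cast hk)

theorem continuousOn_PW (hD : 0 < D) : ContinuousOn (PW lam D) (Ici 0) := by
  intro x hx
  have hcont : ContinuousOn (PW lam D) (Icc 0 (x + 1)) := by
    set n := ⌊(x + 1) / D⌋₊
    have hsum : Continuous fun w =>
        (1 - lam * D) * ∑ k ∈ range (n + 1), erlangTerm lam k (max (w - k * D) 0) := by
      have := continuous_erlangTerm lam
      fun_prop
    exact hsum.continuousOn.congr fun w hw => PW_eq_sum_max hD hw.1
      (Nat.floor_le_floor (div_le_div_of_nonneg_right hw.2 hD.le))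
  refine (hcont x ⟨hx, by linarith⟩).mono_of_mem_nhdsWithin ?_
  rw [← Ici_inter_Iic]
  exact inter_mem_nhdsWithin _ (Iic_mem_nhds (lt_add_one x))

theorem hasDerivWithinAt_PW (hD : 0 < D) {x : ℝ} (hx : 0 ≤ x) :
    HasDerivWithinAt (PW lam D) (lam * (PW lam D x - PW lam D (x - D))) (Ici x) x := by
  set n := ⌊x / D⌋₊
  have hxn : x < (n + 1) * D := (div_lt_iff₀ hD).1 (Nat.lt_floor_add_one _)
  have hloc : PW lam D =ᶠ[𝓝[≥] x] fun w => (1 - lam * D) * erlangSum lam D (n + 1) w := by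
    filter_upwards [Ico_mem_nhdsGE hxn] with w hw
    rw [PW_of_nonneg (hx.trans hw.1), floor_div_eq_of_mem_Ico hD
      ⟨(le_div_iff₀ hD).1 (Nat.floor_le (div_nonneg hx hD.le)) |>.trans hw.1, hw.2⟩]
  have hsum := ((hasDerivAt_erlangSum_succ lam D n x).const_mul (1 - lam * D)).hasDerivWithinAt
    (s := Ici x)
  refine (hsum.congr_of_eventuallyEq hloc (PW_of_nonneg hx)).congr_deriv ?_
  rw [PW_of_nonneg hx, PW_sub_eq hD]
  ring

theorem isDelaySolution_PW (hD : 0 < D) : IsDelaySolution lam D (PW lam D) where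
  eq_zero_of_neg _ hw := if_pos hw
  continuousOn := continuousOn_PW hD
  hasDerivWithinAt _ hx := hasDerivWithinAt_PW hD hx

theorem fW_eq (hD : 0 < D) (hw : 0 ≤ w) : fW lam D w = lam * (PW lam D w - PW lam D (w - D)) := by
  rw [PW_of_nonneg hw, PW_sub_eq hD, ← mul_sub, erlangSum_succ_sub, fW,
    ← Finset.Ico_add_one_right_eq_Icc, sum_Ico_eq_sum_range, Nat.add_sub_cancel,
    mul_left_comm lam, mul_add lam, mul_sum]
  congr 2
  refine sum_congr rfl fun k _ => ?_
  have hu : w - ((k + 1 : ℕ) : ℝ) * D = w - D - k * D := by push_cast; ring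
  rw [add_comm 1 k, Nat.add_sub_cancel, hu, fW_summand_eq]

theorem PW_zero : PW lam D 0 = 1 - lam * D := by
  simp [PW]

end Erlang

/-- for every `μ > λ`, the improper integral `∫₀^∞ f_W(w) e^{-μ w} dw`
converges and equals `(1 - λD) λ (e^{μD} - 1) / ((μ - λ) e^{μD} + λ)`;
i.e. `lim_{M → ∞} θ(M, -μ)` equals that value. -/
theorem md1_theta_limit (lam D : ℝ) (hlam : 0 < lam) (hD : 0 < D)
    (hstab : lam * D < 1) (μ : ℝ) (hμ : lam < μ) :
    MeasureTheory.IntegrableOn (fun w => fW lam D w * Real.exp (-μ * w)) (Set.Ioi 0) ∧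
    Filter.Tendsto (fun M => ∫ w in (0:ℝ)..M, fW lam D w * Real.exp (-μ * w))
      Filter.atTop
      (nhds ((1 - lam * D) * lam * (Real.exp (μ * D) - 1) /
        ((μ - lam) * Real.exp (μ * D) + lam))) := by
  have hP := isDelaySolution_PW (lam := lam) hD
  obtain ⟨K, hK⟩ := hP.exists_abs_delay_le hlam.le hD hstab
  have hfW : EqOn (fun w => fW lam D w * exp (-μ * w))
      (fun w => lam * (PW lam D w - PW lam D (w - D)) * exp (-μ * w)) (Ici 0) :=
    fun w hw => by simp only [fW_eq hD hw]
  refine ⟨(hP.integrableOn_delay_mul_exp hK (hlam.trans hμ)).congr_fun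
    (hfW.mono Ioi_subset_Ici_self).symm measurableSet_Ioi, ?_⟩
  rw [← PW_zero]
  refine (hP.tendsto_integral_delay_mul_exp hlam.le hD hstab hμ).congr' ?_
  filter_upwards [eventually_ge_atTop 0] with M hM
  refine intervalIntegral.integral_congr fun w hw => (hfW ?_).symm
  rw [uIcc_of_le hM] at hw
  exact hw.1
end

section
/- For every M > 0, one has ∫₀^M P_W(w) e^{−λw} dw = (1 − λD) · Σ_{k=0}^{⌊M/D⌋} (−λ)^k e^{−λkD} (M − kD)^{k+1} / (k+1)!. -/
open Real MeasureTheory Filter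

/-!
Multiplying by `e^{-λw}` turns the `k`-th summand of `P_W(w)` into `c_k (w - kD)^k` with a constant
`c_k = (1 - λD) (-λ)^k e^{-λkD} / k!`, and the summand is present exactly when `kD ≤ w`. On `[0, M]`
the integrand is thus a finite sum of truncated powers `c_k 1_{w ≥ kD} (w - kD)^k`, `kD ≤ M`, each
integrating to `c_k (M - kD)^{k+1} / (k+1)`.
-/

open Set

section Indicator

variable {E : Type*} [NormedAddCommGroup E]

theorem IntervalIntegrable.indicator {f : ℝ → E} {μ : Measure ℝ} {a b : ℝ} {s : Set ℝ}
    (hf : IntervalIntegrable f μ a b) (hs : MeasurableSet s) :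
    IntervalIntegrable (s.indicator f) μ a b :=
  ⟨hf.1.indicator hs, hf.2.indicator hs⟩

theorem intervalIntegral.integral_indicator_Ici [NormedSpace ℝ E] {a b c : ℝ} (hab : a ≤ b)
    (hbc : b ≤ c) (f : ℝ → E) : ∫ x in a..c, (Ici b).indicator f x = ∫ x in b..c, f x := by
  rw [intervalIntegral.integral_of_le (hab.trans hbc), intervalIntegral.integral_of_le hbc,
    setIntegral_indicator measurableSet_Ici]
  rcases hab.lt_or_eq with hab | rfl
  · rw [← integral_Icc_eq_integral_Ioc]
    congr 2
    ext x
    simp only [mem_inter_iff, mem_Ioc, mem_Ici, mem_Icc]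
    constructor
    · rintro ⟨⟨-, hxc⟩, hbx⟩
      exact ⟨hbx, hxc⟩
    · rintro ⟨hbx, hxc⟩
      exact ⟨⟨hab.trans_le hbx, hxc⟩, hbx⟩
  · rw [inter_eq_left.mpr (Ioc_subset_Ioi_self.trans Ioi_subset_Ici_self)]

end Indicator

theorem intervalIntegral.integral_sub_pow (b c : ℝ) (k : ℕ) :
    ∫ x in b..c, (x - b) ^ k = (c - b) ^ (k + 1) / (k + 1) := by
  simp [intervalIntegral.integral_comp_sub_right (fun x => x ^ k), integral_pow]

theorem Finset.range_floor_div_add_one_eq_filter {D w M : ℝ} (hD : 0 < D) (hw : 0 ≤ w)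
    (hwM : w ≤ M) :
    Finset.range (⌊w / D⌋₊ + 1) =
      (Finset.range (⌊M / D⌋₊ + 1)).filter fun k : ℕ => (k : ℝ) * D ≤ w := by
  ext k
  have hM : 0 ≤ M := hw.trans hwM
  simp only [Finset.mem_range, Finset.mem_filter, Nat.lt_succ_iff,
    Nat.le_floor_iff (div_nonneg hw hD.le), Nat.le_floor_iff (div_nonneg hM hD.le), le_div_iff₀ hD]
  exact ⟨fun h => ⟨h.trans hwM, h⟩, And.right⟩

theorem PW_mul_exp_neg_eq_sum_indicator {lam D M w : ℝ} (hD : 0 < D) (hw : w ∈ Icc 0 M) :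
    PW lam D w * Real.exp (-lam * w) =
      ∑ k ∈ Finset.range (⌊M / D⌋₊ + 1), (Ici ((k : ℝ) * D)).indicator (fun x =>
        (1 - lam * D) * ((-lam) ^ k * Real.exp (-lam * k * D) / k.factorial) * (x - k * D) ^ k) w := by
  rw [PW, if_neg hw.1.not_gt, Finset.range_floor_div_add_one_eq_filter hD hw.1 hw.2,
    Finset.sum_filter, mul_assoc, Finset.sum_mul, Finset.mul_sum]
  refine Finset.sum_congr rfl fun k _ => ?_
  simp only [indicator_apply, mem_Ici]
  split_ifs
  · have hexp : Real.exp (lam * (w - k * D)) * Real.exp (-lam * w) = Real.exp (-lam * k * D) := by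
      rw [← Real.exp_add]
      ring_nf
    rw [neg_mul_eq_neg_mul, mul_pow, ← hexp]
    ring
  · simp

theorem md1_cdf_exp_integral_general (lam D : ℝ) (hD : 0 < D) (M : ℝ) (hM : 0 < M) :
    ∫ w in (0:ℝ)..M, PW lam D w * Real.exp (-lam * w) =
      (1 - lam * D) * ∑ k ∈ Finset.range (⌊M / D⌋₊ + 1),
        (-lam) ^ k * Real.exp (-lam * (k : ℝ) * D) * (M - (k : ℝ) * D) ^ (k + 1) /
          (Nat.factorial (k + 1)) := by
  have hkD_le : ∀ k ∈ Finset.range (⌊M / D⌋₊ + 1), (k : ℝ) * D ≤ M := fun k hk =>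
    (le_div_iff₀ hD).1 <| (Nat.le_floor_iff (by positivity)).1 <|
      Nat.lt_succ_iff.1 (Finset.mem_range.1 hk)
  rw [intervalIntegral.integral_congr fun w hw =>
      PW_mul_exp_neg_eq_sum_indicator hD (uIcc_of_le hM.le ▸ hw),
    intervalIntegral.integral_finsetSum fun k _ =>
      (Continuous.intervalIntegrable (by fun_prop) 0 M).indicator measurableSet_Ici,
    Finset.mul_sum]
  refine Finset.sum_congr rfl fun k hk => ?_
  rw [intervalIntegral.integral_indicator_Ici (by positivity) (hkD_le k hk),
    intervalIntegral.integral_const_mul, intervalIntegral.integral_sub_pow, Nat.factorial_succ]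
  push_cast
  field_simp

/-- `∫₀^M P_W(w) e^{-λ w} dw
= (1 - λD) Σ_{k=0}^{⌊M/D⌋} (-λ)^k e^{-λ k D} (M - kD)^{k+1} / (k+1)!`. -/
theorem md1_cdf_exp_integral (lam D : ℝ) (hlam : 0 < lam) (hD : 0 < D)
    (hstab : lam * D < 1) (M : ℝ) (hM : 0 < M) :
    ∫ w in (0:ℝ)..M, PW lam D w * Real.exp (-lam * w) =
      (1 - lam * D) * ∑ k ∈ Finset.range (⌊M / D⌋₊ + 1),
        (-lam) ^ k * Real.exp (-lam * (k : ℝ) * D) * (M - (k : ℝ) * D) ^ (k + 1) /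
          (Nat.factorial (k + 1)) :=
  md1_cdf_exp_integral_general lam D hD M hM
end
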